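/- Finite zero-sum game minimax (used for the ordinal Byzantine secretary): for finite sets A, B and payoff K : A × B → ℝ, the maximin over mixed strategies equals the minimax over mixed strategies: max over distributions a on A of min over distributions b on B of E[K] equals min over b of max over a of E[K]. -/

import Mathlib

/-!
Both values of the game are attained: the maximin value `max_p min_j (pM)_j` and the minimax
value `min_q max_i (Mq)_i`, by compactness of the simplices. If the maximin value `c` were below
the minimax value, every mixed column strategy `q` would leave some row above `c`, so the
compact convex set `{c - Mq}` misses the nonnegative orthant. A separating hyperplane then has
nonnegative normal, which normalised is a mixed row strategy guaranteeing more than `c`.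
Optimal strategies with equal guarantees form a saddle point.
-/

open Finset Matrix

section StdSimplex

variable {ι : Type*} [Fintype ι] {w v : ι → ℝ} {c : ℝ}

lemma dotProduct_le_of_mem_stdSimplex (hw : w ∈ stdSimplex ℝ ι) (hv : ∀ i, v i ≤ c) :
    w ⬝ᵥ v ≤ c :=
  calc w ⬝ᵥ v ≤ ∑ i, w i * c := sum_le_sum fun i _ => mul_le_mul_of_nonneg_left (hv i) (hw.1 i)
    _ = c := by rw [← sum_mul, hw.2, one_mul]

lemma le_dotProduct_of_mem_stdSimplex (hw : w ∈ stdSimplex ℝ ι) (hv : ∀ i, c ≤ v i) :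
    c ≤ w ⬝ᵥ v :=
  calc c = ∑ i, w i * c := by rw [← sum_mul, hw.2, one_mul]
    _ ≤ w ⬝ᵥ v := sum_le_sum fun i _ => mul_le_mul_of_nonneg_left (hv i) (hw.1 i)

lemma inv_sum_smul_mem_stdSimplex (hw : 0 ≤ w) (hsum : 0 < ∑ i, w i) :
    (∑ i, w i)⁻¹ • w ∈ stdSimplex ℝ ι :=
  ⟨fun i => smul_nonneg (inv_nonneg.2 hsum.le) (hw i), by
    simp only [Pi.smul_apply, smul_eq_mul, ← mul_sum, inv_mul_cancel₀ hsum.ne']⟩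

end StdSimplex

namespace Matrix

variable {m n : Type*} [Fintype m] [Fintype n]

/-- Ville's theorem of the alternative. -/
theorem exists_mem_stdSimplex_forall_lt_vecMul [Nonempty n] (M : Matrix m n ℝ) (c : ℝ)
    (h : ∀ q ∈ stdSimplex ℝ n, ∃ i, c < (M *ᵥ q) i) :
    ∃ p ∈ stdSimplex ℝ m, ∀ j, c < (p ᵥ* M) j := by
  classical
  let shift : (n → ℝ) →ᵃ[ℝ] (m → ℝ) :=
    AffineMap.const ℝ (n → ℝ) (fun _ => c) - M.mulVecLin.toAffineMap
  have hshift (q : n → ℝ) : shift q = (fun _ => c) - M *ᵥ q := rfl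
  have hdisj : Disjoint (shift '' stdSimplex ℝ n) (ProperCone.positive ℝ (m → ℝ)) := by
    rw [Set.disjoint_left]
    rintro _ ⟨q, hq, rfl⟩ hpos
    obtain ⟨i, hi⟩ := h q hq
    have := hpos i
    simp only [hshift, Pi.zero_apply, Pi.sub_apply, sub_nonneg] at this
    exact hi.not_ge this
  obtain ⟨f, hf_nonneg, hf_neg⟩ := (ProperCone.positive ℝ (m → ℝ)).hyperplane_separation
    ((convex_stdSimplex ℝ n).affine_image shift)
    ((isCompact_stdSimplex ℝ n).image shift.continuous_of_finiteDimensional) hdisj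
  set a : m → ℝ := (dotProductEquiv ℝ m).symm f.toLinearMap
  have hf (z : m → ℝ) : f z = a ⬝ᵥ z :=
    (LinearMap.congr_fun ((dotProductEquiv ℝ m).apply_symm_apply f.toLinearMap) z).symm
  have ha : 0 ≤ a := fun i => hf_nonneg _ (Pi.single_nonneg.2 zero_le_one)
  have hcol (j : n) : (∑ i, a i) * c < (a ᵥ* M) j := by
    have := hf_neg _ ⟨Pi.single j 1, single_mem_stdSimplex ℝ j, rfl⟩
    rw [hf, hshift, dotProduct_sub, dotProduct_mulVec, dotProduct_single_one] at this
    simpa [dotProduct, ← sum_mul] using this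
  have hsum : 0 < ∑ i, a i := by
    refine (sum_nonneg fun i _ => ha i).lt_of_ne fun h0 => ?_
    have : a = 0 := (Fintype.sum_eq_zero_iff_of_nonneg ha).1 h0.symm
    simpa [this] using hcol (Classical.arbitrary n)
  refine ⟨(∑ i, a i)⁻¹ • a, inv_sum_smul_mem_stdSimplex ha hsum, fun j => ?_⟩
  rw [smul_vecMul, Pi.smul_apply, smul_eq_mul, lt_inv_mul_iff₀ hsum]
  exact hcol j

theorem exists_forall_mulVec_le_le_vecMul [Nonempty m] [Nonempty n] (M : Matrix m n ℝ) :
    ∃ p ∈ stdSimplex ℝ m, ∃ q ∈ stdSimplex ℝ n, ∃ v : ℝ,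
      (∀ i, (M *ᵥ q) i ≤ v) ∧ ∀ j, v ≤ (p ᵥ* M) j := by
  classical
  let g (q : n → ℝ) : ℝ := univ.sup' univ_nonempty (M *ᵥ q)
  let φ (p : m → ℝ) : ℝ := univ.inf' univ_nonempty (p ᵥ* M)
  have hg : Continuous g := Continuous.finset_sup'_apply _ fun i _ =>
    (continuous_apply i).comp (continuous_const.matrix_mulVec continuous_id)
  have hφ : Continuous φ := Continuous.finset_inf'_apply _ fun j _ =>
    (continuous_apply j).comp (continuous_id.matrix_vecMul continuous_const)
  obtain ⟨q, hq, hq_min⟩ := (isCompact_stdSimplex ℝ n).exists_isMinOn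
    ⟨_, single_mem_stdSimplex ℝ (Classical.arbitrary n)⟩ hg.continuousOn
  obtain ⟨p, hp, hp_max⟩ := (isCompact_stdSimplex ℝ m).exists_isMaxOn
    ⟨_, single_mem_stdSimplex ℝ (Classical.arbitrary m)⟩ hφ.continuousOn
  refine ⟨p, hp, q, hq, g q, fun i => le_sup' _ (mem_univ i), fun j => ?_⟩
  suffices g q ≤ φ p from this.trans (inf'_le _ (mem_univ j))
  by_contra! hlt
  obtain ⟨p', hp', hp'_gt⟩ := exists_mem_stdSimplex_forall_lt_vecMul M (φ p) fun q' hq' => by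
    simpa [g, lt_sup'_iff] using hlt.trans_le (hq_min hq')
  exact not_lt.2 (hp_max hp') ((lt_inf'_iff _).2 fun j _ => hp'_gt j)

theorem exists_saddlePoint [Nonempty m] [Nonempty n] (M : Matrix m n ℝ) :
    ∃ p ∈ stdSimplex ℝ m, ∃ q ∈ stdSimplex ℝ n,
      (∀ q' ∈ stdSimplex ℝ n, p ⬝ᵥ (M *ᵥ q) ≤ p ⬝ᵥ (M *ᵥ q')) ∧
      ∀ p' ∈ stdSimplex ℝ m, p' ⬝ᵥ (M *ᵥ q) ≤ p ⬝ᵥ (M *ᵥ q) := by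
  obtain ⟨p, hp, q, hq, v, hq_le, hp_ge⟩ := exists_forall_mulVec_le_le_vecMul M
  have upper (p' : m → ℝ) (hp' : p' ∈ stdSimplex ℝ m) : p' ⬝ᵥ (M *ᵥ q) ≤ v :=
    dotProduct_le_of_mem_stdSimplex hp' hq_le
  have lower (q' : n → ℝ) (hq' : q' ∈ stdSimplex ℝ n) : v ≤ p ⬝ᵥ (M *ᵥ q') := by
    rw [dotProduct_mulVec, dotProduct_comm]
    exact le_dotProduct_of_mem_stdSimplex hq' hp_ge
  exact ⟨p, hp, q, hq, fun q' hq' => (upper p hp).trans (lower q' hq'),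
    fun p' hp' => (upper p' hp').trans (lower q hq)⟩

end Matrix

lemma sum_sum_mul_mul_eq_dotProduct_mulVec {A B : Type*} [Fintype A] [Fintype B]
    (K : A → B → ℝ) (p : A → ℝ) (q : B → ℝ) :
    ∑ x, ∑ y, p x * q y * K x y = p ⬝ᵥ (of K *ᵥ q) := by
  simp only [dotProduct, mulVec, of_apply, mul_sum]
  exact sum_congr rfl fun x _ => sum_congr rfl fun y _ => by ring

/-- Von Neumann's minimax theorem for finite zero-sum games, in saddle-point form:
for finite nonempty `A`, `B` and payoff `K`, there exist mixed strategies `p`, `q`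
(points of the standard simplex) such that `p` is a best response to `q` and `q` to
`p`; hence `max_p min_q E[K] = min_q max_p E[K]`, with both optima attained. -/
theorem stmt_18 {A B : Type*} [Fintype A] [Fintype B] [Nonempty A] [Nonempty B]
    (K : A → B → ℝ) :
    ∃ p ∈ stdSimplex ℝ A, ∃ q ∈ stdSimplex ℝ B,
      (∀ q' ∈ stdSimplex ℝ B,
        ∑ x : A, ∑ y : B, p x * q y * K x y ≤ ∑ x : A, ∑ y : B, p x * q' y * K x y) ∧
      (∀ p' ∈ stdSimplex ℝ A,
        ∑ x : A, ∑ y : B, p' x * q y * K x y ≤ ∑ x : A, ∑ y : B, p x * q y * K x y) := by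
  simp only [sum_sum_mul_mul_eq_dotProduct_mulVec]
  exact exists_saddlePoint (of K)
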